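/- arXiv:1805.09766 — 4 statements merged into one kernel-verified Lean document; each statement's English description precedes it below -/
import Mathlib

section
/- Let X, Y, Z be independent standard normal random variables, let x ≥ 0 and set R_x = ((x+X)² + Y² + Z²)^{1/2}. Then for all 0 ≤ a ≤ b, ∫_a^b √(2/π) r² e^{−(r+x)²/2} dr ≤ P( a ≤ R_x ≤ b ) ≤ ∫_a^b √(2/π) r² e^{−(r−x)²/2} dr. -/
open MeasureTheory ProbabilityTheory Filter Real
open scoped ENNReal NNReal

lemma aux_withDensity_prod {α β : Type*} [MeasurableSpace α] [MeasurableSpace β]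
    {μ : Measure α} {ν : Measure β} [SigmaFinite μ] [SigmaFinite ν]
    {f : α → ℝ≥0∞} {g : β → ℝ≥0∞} (hf : Measurable f) (hg : Measurable g)
    [SigmaFinite (ν.withDensity g)] [SigmaFinite (μ.withDensity f)] :
    (μ.withDensity f).prod (ν.withDensity g) = (μ.prod ν).withDensity fun z ↦ f z.1 * g z.2 :=
  (Measure.prod_eq (μ := μ.withDensity f) (ν := ν.withDensity g)
    (μν := (μ.prod ν).withDensity fun z ↦ f z.1 * g z.2) fun s t hs ht ↦ by
    rw [withDensity_apply _ (hs.prod ht), ← Measure.prod_restrict,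
      lintegral_prod_mul hf.aemeasurable hg.aemeasurable,
      ← withDensity_apply _ hs, ← withDensity_apply _ ht])

lemma aux_iIndep_congr {Ω ι : Type*} [MeasurableSpace Ω] {P : Measure Ω}
    {β : ι → Type*} {m : ∀ i, MeasurableSpace (β i)} {f g : ∀ i, Ω → β i}
    (h : iIndepFun (m := m) f P) (hfg : ∀ i, f i =ᵐ[P] g i) : iIndepFun (m := m) g P := by
  rw [iIndepFun_iff_measure_inter_preimage_eq_mul] at h ⊢
  intro S sets hsets
  have hae : ∀ᵐ ω ∂P, ∀ i ∈ S, f i ω = g i ω :=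
    (ae_ball_iff S.countable_toSet).2 fun i _ => hfg i
  have h1 : P (⋂ i ∈ S, g i ⁻¹' sets i) = P (⋂ i ∈ S, f i ⁻¹' sets i) := by
    refine measure_congr (Filter.eventuallyEq_set.2 ?_)
    filter_upwards [hae] with ω hω
    simp only [Set.mem_iInter, Set.mem_preimage]
    exact ⟨fun h' i hi => (hω i hi) ▸ h' i hi, fun h' i hi => (hω i hi) ▸ h' i hi⟩
  have h2 : ∀ i ∈ S, P (g i ⁻¹' sets i) = P (f i ⁻¹' sets i) := by
    intro i _
    refine measure_congr (Filter.eventuallyEq_set.2 ?_)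
    filter_upwards [hfg i] with ω hω
    simp [Set.mem_preimage, hω]
  rw [h1, Finset.prod_congr rfl h2]
  exact h S hsets



noncomputable def phiE : EuclideanSpace ℝ (Fin 3) ≃ᵐ ℝ × ℝ × ℝ :=
  (MeasurableEquiv.toLp 2 (Fin 3 → ℝ)).symm.trans
    ((MeasurableEquiv.piFinSuccAbove (fun _ : Fin 3 => ℝ) 0).trans
      ((MeasurableEquiv.refl ℝ).prodCongr (MeasurableEquiv.finTwoArrow)))

lemma phiE_mp : MeasurePreserving phiE volume volume := by
  have m1 := EuclideanSpace.volume_preserving_symm_measurableEquiv_toLp (Fin 3)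
  have m2 := volume_preserving_piFinSuccAbove (fun _ : Fin 3 => ℝ) 0
  have m3 := (MeasurePreserving.id (volume : Measure ℝ)).prod
    (volume_preserving_finTwoArrow ℝ)
  exact (m3.comp m2).comp m1

lemma phiE_apply (w : EuclideanSpace ℝ (Fin 3)) : phiE w = (w 0, (w 1, w 2)) := by
  simp [phiE, MeasurableEquiv.piFinSuccAbove, MeasurableEquiv.finTwoArrow,
    MeasurableEquiv.toLp, Fin.succAbove]
  rfl

lemma norm_phiE (w : EuclideanSpace ℝ (Fin 3)) :
    Real.sqrt ((phiE w).1 ^ 2 + (phiE w).2.1 ^ 2 + (phiE w).2.2 ^ 2) = ‖w‖ := by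
  rw [phiE_apply, EuclideanSpace.norm_eq]
  simp [Fin.sum_univ_three, Real.norm_eq_abs, sq_abs]

lemma ball_vol : (volume (Metric.ball (0 : EuclideanSpace ℝ (Fin 3)) 1)).toReal = 4 / 3 * π := by
  rw [EuclideanSpace.volume_ball]
  have hΓ : Real.Gamma ((Fintype.card (Fin 3) : ℝ) / 2 + 1) = 3 / 4 * Real.sqrt π := by
    rw [Fintype.card_fin]
    push_cast
    rw [Real.Gamma_add_one (by norm_num), show (3:ℝ)/2 = 1/2 + 1 by norm_num,
      Real.Gamma_add_one (by norm_num), Real.Gamma_one_half_eq]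
    ring
  rw [hΓ]
  have hs : (0:ℝ) < Real.sqrt π := Real.sqrt_pos.2 pi_pos
  have hsq : Real.sqrt π ^ 2 = π := Real.sq_sqrt pi_pos.le
  simp only [Fintype.card_fin, ENNReal.ofReal_one, one_pow, one_mul]
  rw [ENNReal.toReal_ofReal (by positivity)]
  field_simp
  nlinarith [hsq, hs]

lemma const_id : 3 * (4 / 3 * π) * ((Real.sqrt (2 * π))⁻¹) ^ 3 = Real.sqrt (2 / π) := by
  have h2π : (0:ℝ) < 2 * π := by positivity
  have hs : (0:ℝ) < Real.sqrt (2 * π) := Real.sqrt_pos.2 h2π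
  have hs2 : Real.sqrt (2 * π) ^ 2 = 2 * π := Real.sq_sqrt h2π.le
  have hkey : Real.sqrt (2 / π) = 2 / Real.sqrt (2 * π) := by
    rw [eq_div_iff hs.ne', ← Real.sqrt_mul (by positivity)]
    rw [show 2 / π * (2 * π) = 4 by field_simp; ring]
    rw [show (4:ℝ) = 2 ^ 2 by norm_num, Real.sqrt_sq (by norm_num)]
  have h3 : Real.sqrt (2 * π) ^ 3 = (2 * π) * Real.sqrt (2 * π) := by
    rw [pow_succ, hs2]
  rw [hkey, inv_pow, h3]
  rw [eq_div_iff hs.ne']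
  field_simp
  ring

noncomputable def nfun (x : ℝ) (p : ℝ × ℝ × ℝ) : ℝ :=
  Real.sqrt ((x + p.1) ^ 2 + p.2.1 ^ 2 + p.2.2 ^ 2)

lemma nfun_cont (x : ℝ) : Continuous (nfun x) :=
  Real.continuous_sqrt.comp (by fun_prop)

lemma aux_eval (x a b c : ℝ) (hx : 0 ≤ x) (ha : 0 ≤ a) (hab : a ≤ b) :
    ∫⁻ p in {p : ℝ × ℝ × ℝ | a ≤ nfun x p ∧ nfun x p ≤ b},
        ENNReal.ofReal (((Real.sqrt (2 * π))⁻¹) ^ 3 * Real.exp (-(nfun x p + c) ^ 2 / 2))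
      = ENNReal.ofReal (∫ r in a..b, Real.sqrt (2 / π) * r ^ 2 * Real.exp (-(r + c) ^ 2 / 2)) := by
  set Cc : ℝ := ((Real.sqrt (2 * π))⁻¹) ^ 3 with hCc
  have hCc0 : 0 ≤ Cc := by positivity
  set S : Set (ℝ × ℝ × ℝ) := {p | a ≤ nfun x p ∧ nfun x p ≤ b} with hSdef
  have hb' : 0 ≤ b := ha.trans hab
  have hS : MeasurableSet S := by
    have : S = nfun x ⁻¹' (Set.Icc a b) := rfl
    rw [this]
    exact (nfun_cont x).measurable measurableSet_Icc
  -- boundedness of S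
  have hsub : S ⊆ Set.Icc (-(b+x)) (b+x) ×ˢ (Set.Icc (-b) b ×ˢ Set.Icc (-b) b) := by
    rintro p ⟨h1, h2⟩
    have hn0 : 0 ≤ nfun x p := Real.sqrt_nonneg _
    have hsq : nfun x p ^ 2 = (x + p.1) ^ 2 + p.2.1 ^ 2 + p.2.2 ^ 2 :=
      Real.sq_sqrt (by positivity)
    have hb2 : (x + p.1) ^ 2 + p.2.1 ^ 2 + p.2.2 ^ 2 ≤ b ^ 2 := by
      rw [← hsq]; exact pow_le_pow_left₀ hn0 h2 2
    refine ⟨⟨by nlinarith, by nlinarith⟩, ⟨by nlinarith, by nlinarith⟩,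
      by nlinarith, by nlinarith⟩
  have hvol : volume S ≠ ⊤ := by
    refine (lt_of_le_of_lt (measure_mono hsub) ?_).ne
    exact ((isCompact_Icc.prod (isCompact_Icc.prod isCompact_Icc)).measure_lt_top)
  -- integrability
  have hcont : Continuous fun p : ℝ × ℝ × ℝ => Cc * Real.exp (-(nfun x p + c) ^ 2 / 2) := by
    have := nfun_cont x
    fun_prop
  have hInt : IntegrableOn (fun p : ℝ × ℝ × ℝ => Cc * Real.exp (-(nfun x p + c) ^ 2 / 2))
      S volume := by
    refine Integrable.mono' (g := fun _ => Cc) (integrableOn_const hvol)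
      hcont.aestronglyMeasurable.restrict (ae_of_all _ fun p => ?_)
    rw [Real.norm_eq_abs, abs_of_nonneg (by positivity)]
    nlinarith [Real.exp_le_one_iff.2
        (show -(nfun x p + c)^2/2 ≤ 0 by nlinarith [sq_nonneg (nfun x p + c)]),
      Real.exp_pos (-(nfun x p + c)^2/2), hCc0]
  have hnn : 0 ≤ᵐ[volume.restrict S]
      fun p : ℝ × ℝ × ℝ => Cc * Real.exp (-(nfun x p + c) ^ 2 / 2) :=
    ae_of_all _ fun p => by positivity
  rw [← ofReal_integral_eq_lintegral_ofReal hInt hnn]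
  congr 1
  -- now the real-integral computation
  set g : ℝ → ℝ := fun r => Cc * Real.exp (-(r + c) ^ 2 / 2) with hg
  set F : ℝ → ℝ := Set.indicator (Set.Icc a b) g with hF
  set efun : ℝ × ℝ × ℝ → ℝ := fun p => Real.sqrt (p.1 ^ 2 + p.2.1 ^ 2 + p.2.2 ^ 2) with he
  have step1 : ∫ p in S, Cc * Real.exp (-(nfun x p + c) ^ 2 / 2)
      = ∫ p : ℝ × ℝ × ℝ, F (efun (p + (x, 0, 0))) := by
    rw [← integral_indicator hS]
    congr 1
    funext p
    have hnp : nfun x p = efun (p + (x, 0, 0)) := by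
      simp only [nfun, efun, Prod.fst_add, Prod.snd_add]
      norm_num [add_comm]
    by_cases hp : p ∈ S
    · rw [Set.indicator_of_mem hp, hF, Set.indicator_of_mem (by rw [← hnp]; exact hp), hg, hnp]
    · rw [Set.indicator_of_notMem hp, hF, Set.indicator_of_notMem (by rw [← hnp]; exact hp)]
  haveI h1 : ((volume : Measure ℝ).prod (volume : Measure ℝ)).IsAddRightInvariant :=
    inferInstance
  haveI h2 : SFinite ((volume : Measure ℝ).prod (volume : Measure ℝ)) := inferInstance
  haveI : (volume : Measure (ℝ × ℝ × ℝ)).IsAddRightInvariant :=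
    inferInstanceAs (((volume : Measure ℝ).prod
      ((volume : Measure ℝ).prod (volume : Measure ℝ))).IsAddRightInvariant)
  have step2 : ∫ p : ℝ × ℝ × ℝ, F (efun (p + (x, 0, 0))) = ∫ p : ℝ × ℝ × ℝ, F (efun p) :=
    integral_add_right_eq_self (fun p => F (efun p)) (x, 0, 0)
  have step3 : ∫ p : ℝ × ℝ × ℝ, F (efun p) = ∫ w : EuclideanSpace ℝ (Fin 3), F ‖w‖ := by
    rw [← phiE_mp.integral_comp phiE.measurableEmbedding (fun p => F (efun p))]
    congr 1
    funext w
    rw [show efun (phiE w) = ‖w‖ from norm_phiE w]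
  have step4 : ∫ w : EuclideanSpace ℝ (Fin 3), F ‖w‖
      = (3:ℕ) • (volume (Metric.ball (0 : EuclideanSpace ℝ (Fin 3)) 1)).toReal
          • ∫ r in Set.Ioi (0:ℝ), r ^ 2 • F r := by
    have h := integral_fun_norm_addHaar (volume : Measure (EuclideanSpace ℝ (Fin 3))) F
    rwa [show Module.finrank ℝ (EuclideanSpace ℝ (Fin 3)) = 3 from by
      simp [finrank_euclideanSpace]] at h
  have haeset : (Set.Icc a b ∩ Set.Ioi 0 : Set ℝ) =ᵐ[volume] Set.Ioc a b := by
    refine MeasureTheory.ae_eq_set.2 ⟨measure_mono_null ?_ (measure_singleton a), ?_⟩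
    · rintro r ⟨⟨⟨hr1, hr2⟩, hr3⟩, hr4⟩
      simp only [Set.mem_Ioc, not_and, not_le] at hr4
      have : ¬ a < r := fun hlt => absurd (hr4 hlt) (not_lt.2 hr2)
      simp [le_antisymm (not_lt.1 this) hr1]
    · rw [Set.diff_eq_empty.mpr ?_]
      · exact measure_empty
      · rintro r ⟨hr1, hr2⟩
        exact ⟨⟨hr1.le, hr2⟩, lt_of_le_of_lt ha hr1⟩
  have step5 : ∫ r in Set.Ioi (0:ℝ), r ^ 2 • F r
      = ∫ r in Set.Ioc a b, r ^ 2 * g r := by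
    have : (fun r : ℝ => r ^ 2 • F r) = Set.indicator (Set.Icc a b) (fun r => r ^ 2 * g r) := by
      funext r
      by_cases hr : r ∈ Set.Icc a b
      · simp [hF, Set.indicator_of_mem hr, smul_eq_mul]
      · simp [hF, Set.indicator_of_notMem hr]
    rw [this, integral_indicator measurableSet_Icc, Measure.restrict_restrict measurableSet_Icc,
      setIntegral_congr_set haeset]
  rw [step1, step2, step3, step4, step5, ball_vol, intervalIntegral.integral_of_le hab]
  rw [nsmul_eq_mul, smul_eq_mul, ← mul_assoc, ← MeasureTheory.integral_const_mul]
  congr 1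
  funext r
  rw [hg, ← const_id]
  push_cast
  ring

/-- for `X, Y, Z` independent standard normals, `x ≥ 0` and
`R_x = ((x+X)² + Y² + Z²)^{1/2}`, the probability `P(a ≤ R_x ≤ b)` is bounded between
`∫_a^b √(2/π) r² e^{-(r+x)²/2} dr` and `∫_a^b √(2/π) r² e^{-(r-x)²/2} dr`. -/
theorem bessel_density_bounds {Ω : Type*} [MeasurableSpace Ω]
    (P : Measure Ω) [IsProbabilityMeasure P] (X Y Z : Ω → ℝ)
    (hind : iIndepFun ![X, Y, Z] P)
    (hX : P.map X = gaussianReal 0 1) (hY : P.map Y = gaussianReal 0 1)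
    (hZ : P.map Z = gaussianReal 0 1)
    (x : ℝ) (hx : 0 ≤ x) (a b : ℝ) (ha : 0 ≤ a) (hab : a ≤ b) :
    (∫ r in a..b, Real.sqrt (2 / π) * r ^ 2 * Real.exp (-(r + x) ^ 2 / 2))
        ≤ (P {ω | a ≤ Real.sqrt ((x + X ω) ^ 2 + Y ω ^ 2 + Z ω ^ 2) ∧
            Real.sqrt ((x + X ω) ^ 2 + Y ω ^ 2 + Z ω ^ 2) ≤ b}).toReal ∧
      (P {ω | a ≤ Real.sqrt ((x + X ω) ^ 2 + Y ω ^ 2 + Z ω ^ 2) ∧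
            Real.sqrt ((x + X ω) ^ 2 + Y ω ^ 2 + Z ω ^ 2) ≤ b}).toReal
        ≤ ∫ r in a..b, Real.sqrt (2 / π) * r ^ 2 * Real.exp (-(r - x) ^ 2 / 2) := by
  have hmeas : ∀ (W : Ω → ℝ), P.map W = gaussianReal 0 1 → AEMeasurable W P := by
    intro W hW
    by_contra h
    have h0 : P.map W = 0 := Measure.map_of_not_aemeasurable h
    rw [hW] at h0
    have h1 := measure_univ (μ := gaussianReal 0 1)
    rw [h0] at h1
    simp at h1
  have hXm := hmeas X hX
  have hYm := hmeas Y hY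
  have hZm := hmeas Z hZ
  set X' := hXm.mk X with hX'def
  set Y' := hYm.mk Y with hY'def
  set Z' := hZm.mk Z with hZ'def
  have hX'm : Measurable X' := hXm.measurable_mk
  have hY'm : Measurable Y' := hYm.measurable_mk
  have hZ'm : Measurable Z' := hZm.measurable_mk
  have hXae : X =ᵐ[P] X' := hXm.ae_eq_mk
  have hYae : Y =ᵐ[P] Y' := hYm.ae_eq_mk
  have hZae : Z =ᵐ[P] Z' := hZm.ae_eq_mk
  have hX' : P.map X' = gaussianReal 0 1 := by rw [← Measure.map_congr hXae, hX]
  have hY' : P.map Y' = gaussianReal 0 1 := by rw [← Measure.map_congr hYae, hY]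
  have hZ' : P.map Z' = gaussianReal 0 1 := by rw [← Measure.map_congr hZae, hZ]
  have hind' : iIndepFun ![X', Y', Z'] P := by
    refine aux_iIndep_congr hind fun i => ?_
    fin_cases i
    · simpa using hXae
    · simpa using hYae
    · simpa using hZae
  have hmeas' : ∀ i, Measurable (![X', Y', Z'] i) := by
    intro i; fin_cases i
    · simpa using hX'm
    · simpa using hY'm
    · simpa using hZ'm
  have hYZind : IndepFun Y' Z' P := by
    have := hind'.indepFun (show (1 : Fin 3) ≠ 2 by decide)
    simpa using this
  have h12 : IndepFun X' (fun ω => (Y' ω, Z' ω)) P := by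
    have := hind'.indepFun_prodMk hmeas' 1 2 0 (by decide) (by decide)
    simpa using this.symm
  have hpairlaw : P.map (fun ω => (Y' ω, Z' ω)) = (gaussianReal 0 1).prod (gaussianReal 0 1) := by
    rw [(indepFun_iff_map_prod_eq_prod_map_map hY'm.aemeasurable hZ'm.aemeasurable).mp hYZind,
      hY', hZ']
  have hjoint : P.map (fun ω => (X' ω, (Y' ω, Z' ω)))
      = (gaussianReal 0 1).prod ((gaussianReal 0 1).prod (gaussianReal 0 1)) := by
    rw [(indepFun_iff_map_prod_eq_prod_map_map hX'm.aemeasurable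
      (hY'm.prodMk hZ'm).aemeasurable).mp h12, hX', hpairlaw]

  -- density representation of the triple product
  haveI hsf : SigmaFinite (volume.withDensity (gaussianPDF 0 1)) := by
    rw [← gaussianReal_of_var_ne_zero 0 one_ne_zero]; infer_instance
  have hGG : (gaussianReal 0 1).prod (gaussianReal 0 1)
      = ((volume : Measure ℝ).prod volume).withDensity
          (fun z => gaussianPDF 0 1 z.1 * gaussianPDF 0 1 z.2) := by
    rw [gaussianReal_of_var_ne_zero 0 one_ne_zero]
    exact aux_withDensity_prod (measurable_gaussianPDF 0 1) (measurable_gaussianPDF 0 1)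
  haveI hsf2 : SigmaFinite (((volume : Measure ℝ).prod volume).withDensity
      (fun z => gaussianPDF 0 1 z.1 * gaussianPDF 0 1 z.2)) := by
    rw [← hGG]; infer_instance
  have htriple : (gaussianReal 0 1).prod ((gaussianReal 0 1).prod (gaussianReal 0 1))
      = (volume : Measure (ℝ × ℝ × ℝ)).withDensity
          (fun p => gaussianPDF 0 1 p.1 * (gaussianPDF 0 1 p.2.1 * gaussianPDF 0 1 p.2.2)) := by
    rw [hGG]
    nth_rewrite 1 [gaussianReal_of_var_ne_zero 0 one_ne_zero]
    exact aux_withDensity_prod (measurable_gaussianPDF 0 1)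
      ((measurable_gaussianPDF 0 1).comp measurable_fst |>.mul
        ((measurable_gaussianPDF 0 1).comp measurable_snd))
  have hDeq : (fun p : ℝ × ℝ × ℝ =>
        gaussianPDF 0 1 p.1 * (gaussianPDF 0 1 p.2.1 * gaussianPDF 0 1 p.2.2))
      = fun p : ℝ × ℝ × ℝ => ENNReal.ofReal (((Real.sqrt (2 * π))⁻¹) ^ 3
          * Real.exp (-(p.1 ^ 2 + p.2.1 ^ 2 + p.2.2 ^ 2) / 2)) := by
    funext p
    rw [gaussianPDF, gaussianPDF, gaussianPDF,
      ← ENNReal.ofReal_mul (gaussianPDFReal_nonneg 0 1 _),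
      ← ENNReal.ofReal_mul (gaussianPDFReal_nonneg 0 1 _)]
    congr 1
    simp only [gaussianPDFReal, NNReal.coe_one, mul_one, sub_zero]
    rw [show -(p.1 ^ 2 + p.2.1 ^ 2 + p.2.2 ^ 2) / 2
        = -p.1 ^ 2 / 2 + (-p.2.1 ^ 2 / 2 + -p.2.2 ^ 2 / 2) by ring,
      Real.exp_add, Real.exp_add]
    ring

  -- the set in ℝ³
  set S : Set (ℝ × ℝ × ℝ) := {p | a ≤ nfun x p ∧ nfun x p ≤ b} with hSdef
  have hSm : MeasurableSet S := by
    have : S = nfun x ⁻¹' (Set.Icc a b) := rfl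
    rw [this]
    exact (nfun_cont x).measurable measurableSet_Icc
  have hEset : P {ω | a ≤ Real.sqrt ((x + X ω) ^ 2 + Y ω ^ 2 + Z ω ^ 2) ∧
        Real.sqrt ((x + X ω) ^ 2 + Y ω ^ 2 + Z ω ^ 2) ≤ b}
      = ((gaussianReal 0 1).prod ((gaussianReal 0 1).prod (gaussianReal 0 1))) S := by
    have h1 : P {ω | a ≤ Real.sqrt ((x + X ω) ^ 2 + Y ω ^ 2 + Z ω ^ 2) ∧
          Real.sqrt ((x + X ω) ^ 2 + Y ω ^ 2 + Z ω ^ 2) ≤ b}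
        = P ((fun ω => (X' ω, (Y' ω, Z' ω))) ⁻¹' S) := by
      refine measure_congr (Filter.eventuallyEq_set.2 ?_)
      filter_upwards [hXae, hYae, hZae] with ω e1 e2 e3
      simp only [Set.mem_setOf_eq, Set.mem_preimage, hSdef, nfun, e1, e2, e3]
    rw [h1, ← Measure.map_apply (hX'm.prodMk (hY'm.prodMk hZ'm)) hSm, hjoint]
  have hPS : ((gaussianReal 0 1).prod ((gaussianReal 0 1).prod (gaussianReal 0 1))) S
      = ∫⁻ p in S, ENNReal.ofReal (((Real.sqrt (2 * π))⁻¹) ^ 3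
          * Real.exp (-(p.1 ^ 2 + p.2.1 ^ 2 + p.2.2 ^ 2) / 2)) := by
    rw [htriple, withDensity_apply _ hSm, hDeq]
  -- pointwise bounds
  have hCc0 : (0:ℝ) ≤ ((Real.sqrt (2 * π))⁻¹) ^ 3 := by positivity
  have hbnd : ∀ p : ℝ × ℝ × ℝ,
      (-(nfun x p + x) ^ 2 / 2 ≤ -(p.1 ^ 2 + p.2.1 ^ 2 + p.2.2 ^ 2) / 2) ∧
      (-(p.1 ^ 2 + p.2.1 ^ 2 + p.2.2 ^ 2) / 2 ≤ -(nfun x p + -x) ^ 2 / 2) := by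
    intro p
    have hr0 : 0 ≤ nfun x p := Real.sqrt_nonneg _
    have hr2 : nfun x p ^ 2 = (x + p.1) ^ 2 + p.2.1 ^ 2 + p.2.2 ^ 2 :=
      Real.sq_sqrt (by positivity)
    have habs : |x + p.1| ≤ nfun x p := by
      rw [← Real.sqrt_sq_eq_abs]
      exact Real.sqrt_le_sqrt (by nlinarith)
    have h1 := abs_le.1 habs
    constructor
    · nlinarith [mul_nonneg hx (by linarith : (0:ℝ) ≤ nfun x p + (x + p.1))]
    · nlinarith [mul_nonneg hx (by linarith : (0:ℝ) ≤ nfun x p - (x + p.1))]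
  have hlow : ∫⁻ p in S, ENNReal.ofReal (((Real.sqrt (2 * π))⁻¹) ^ 3
        * Real.exp (-(nfun x p + x) ^ 2 / 2))
      ≤ ∫⁻ p in S, ENNReal.ofReal (((Real.sqrt (2 * π))⁻¹) ^ 3
        * Real.exp (-(p.1 ^ 2 + p.2.1 ^ 2 + p.2.2 ^ 2) / 2)) :=
    lintegral_mono fun p => ENNReal.ofReal_le_ofReal
      (mul_le_mul_of_nonneg_left (Real.exp_le_exp.2 (hbnd p).1) hCc0)
  have hupp : ∫⁻ p in S, ENNReal.ofReal (((Real.sqrt (2 * π))⁻¹) ^ 3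
        * Real.exp (-(p.1 ^ 2 + p.2.1 ^ 2 + p.2.2 ^ 2) / 2))
      ≤ ∫⁻ p in S, ENNReal.ofReal (((Real.sqrt (2 * π))⁻¹) ^ 3
        * Real.exp (-(nfun x p + -x) ^ 2 / 2)) :=
    lintegral_mono fun p => ENNReal.ofReal_le_ofReal
      (mul_le_mul_of_nonneg_left (Real.exp_le_exp.2 (hbnd p).2) hCc0)
  have hevalL := aux_eval x a b x hx ha hab
  have hevalU := aux_eval x a b (-x) hx ha hab
  have hfin : ((gaussianReal 0 1).prod ((gaussianReal 0 1).prod (gaussianReal 0 1))) S ≠ ⊤ := by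
    haveI : IsProbabilityMeasure
        ((gaussianReal 0 1).prod ((gaussianReal 0 1).prod (gaussianReal 0 1))) := by
      infer_instance
    exact measure_ne_top _ _
  rw [hEset]
  constructor
  · have hnn : 0 ≤ ∫ r in a..b, Real.sqrt (2 / π) * r ^ 2 * Real.exp (-(r + x) ^ 2 / 2) :=
      intervalIntegral.integral_nonneg hab fun r _ => by positivity
    calc ∫ r in a..b, Real.sqrt (2 / π) * r ^ 2 * Real.exp (-(r + x) ^ 2 / 2)
        = (ENNReal.ofReal (∫ r in a..b,
            Real.sqrt (2 / π) * r ^ 2 * Real.exp (-(r + x) ^ 2 / 2))).toReal :=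
          (ENNReal.toReal_ofReal hnn).symm
      _ = (∫⁻ p in S, ENNReal.ofReal (((Real.sqrt (2 * π))⁻¹) ^ 3
            * Real.exp (-(nfun x p + x) ^ 2 / 2))).toReal := by rw [hevalL]
      _ ≤ (((gaussianReal 0 1).prod ((gaussianReal 0 1).prod (gaussianReal 0 1))) S).toReal := by
          refine ENNReal.toReal_mono hfin ?_
          rw [hPS]
          exact hlow
  · have hnn : 0 ≤ ∫ r in a..b, Real.sqrt (2 / π) * r ^ 2 * Real.exp (-(r + -x) ^ 2 / 2) :=
      intervalIntegral.integral_nonneg hab fun r _ => by positivity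
    have : (((gaussianReal 0 1).prod ((gaussianReal 0 1).prod (gaussianReal 0 1))) S).toReal
        ≤ ∫ r in a..b, Real.sqrt (2 / π) * r ^ 2 * Real.exp (-(r + -x) ^ 2 / 2) := by
      calc (((gaussianReal 0 1).prod ((gaussianReal 0 1).prod (gaussianReal 0 1))) S).toReal
          ≤ (∫⁻ p in S, ENNReal.ofReal (((Real.sqrt (2 * π))⁻¹) ^ 3
              * Real.exp (-(nfun x p + -x) ^ 2 / 2))).toReal := by
            refine ENNReal.toReal_mono ?_ ?_
            · rw [hevalU]; exact ENNReal.ofReal_ne_top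
            · rw [hPS]; exact hupp
        _ = ∫ r in a..b, Real.sqrt (2 / π) * r ^ 2 * Real.exp (-(r + -x) ^ 2 / 2) := by
            rw [hevalU, ENNReal.toReal_ofReal hnn]
    simpa only [← sub_eq_add_neg] using this
end

section
/- Let t ≥ 1, let n be a nonzero integer, and let s, s', θ, θ' ∈ ℝ with |s| + |s'| ≤ t. Then |H(s, θ, s' + 2nt, θ')| ≤ 2 e^{|s| + |s'| − 2|n| t}. -/
open MeasureTheory Filter Real

/-- The covariance kernel `H(s,θ,s',θ') = log( max(e^{-s}, e^{-s'}) / |e^{-s+iθ} - e^{-s'+iθ'}| )`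
of the lateral part of the GFF on the infinite cylinder `ℝ × S¹`. -/
noncomputable def Hker (s θ s' θ' : ℝ) : ℝ :=
  Real.log (max (Real.exp (-s)) (Real.exp (-s')) /
    ‖Complex.exp (-(s : ℂ) + (θ : ℂ) * Complex.I)
      - Complex.exp (-(s' : ℂ) + (θ' : ℂ) * Complex.I)‖)

/-!
Write `z = e^{-u+iθ}` and `w = e^{-v+iθ'}` with `u ≤ v`. Then `H(u,θ,v,θ') = -log (‖z - w‖ / ‖z‖)`,
and `‖z - w‖ / ‖z‖` lies within `r = ‖w‖ / ‖z‖ = e^{-(v-u)}` of `1`, so `|H| ≤ 2r` as soon as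
`r ≤ 1/2`, i.e. `v - u ≥ log 2`. For the translated kernel `v - u = ±(s' + 2nt - s)` has
absolute value at least `2|n|t - |s| - |s'| ≥ t ≥ 1`.
-/

theorem Real.abs_log_le_two_mul_abs_sub_one {x : ℝ} (hx : |x - 1| ≤ 1 / 2) :
    |log x| ≤ 2 * |x - 1| := by
  have hlog := abs_log_sub_add_sum_range_le (x := 1 - x) (by rw [abs_sub_comm]; linarith) 0
  simp only [Finset.range_zero, Finset.sum_empty, zero_add, sub_sub_cancel, pow_one] at hlog
  rw [abs_sub_comm] at hlog
  calc |log x| ≤ |x - 1| / (1 - |x - 1|) := hlog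
    _ ≤ 2 * |x - 1| := by
      rw [div_le_iff₀ (by linarith)]
      nlinarith [abs_nonneg (x - 1)]

theorem abs_log_norm_div_norm_sub_le {E : Type*} [SeminormedAddCommGroup E] {z w : E}
    (hz : 0 < ‖z‖) (hw : 2 * ‖w‖ ≤ ‖z‖) :
    |log (‖z‖ / ‖z - w‖)| ≤ 2 * (‖w‖ / ‖z‖) := by
  have hdist : |‖z - w‖ / ‖z‖ - 1| ≤ ‖w‖ / ‖z‖ := by
    rw [div_sub_one hz.ne', abs_div, abs_of_pos hz]
    gcongr
    simpa using abs_norm_sub_norm_le (z - w) z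
  rw [← inv_div, log_inv, abs_neg]
  calc |log (‖z - w‖ / ‖z‖)| ≤ 2 * |‖z - w‖ / ‖z‖ - 1| :=
        abs_log_le_two_mul_abs_sub_one (hdist.trans (by rw [div_le_iff₀ hz]; linarith))
    _ ≤ 2 * (‖w‖ / ‖z‖) := by gcongr

theorem norm_cexp_neg_add_mul_I (u θ : ℝ) :
    ‖Complex.exp (-(u : ℂ) + (θ : ℂ) * Complex.I)‖ = exp (-u) := by
  simp [Complex.norm_exp]

theorem Hker_comm (s θ s' θ' : ℝ) : Hker s θ s' θ' = Hker s' θ' s θ := by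
  rw [Hker, Hker, max_comm, norm_sub_rev]

theorem abs_Hker_le_two_mul_exp_neg_abs_sub {u v : ℝ} (θ θ' : ℝ) (huv : 1 ≤ |u - v|) :
    |Hker u θ v θ'| ≤ 2 * exp (-|u - v|) := by
  wlog hle : u ≤ v generalizing u v θ θ'
  · rw [Hker_comm, abs_sub_comm]
    exact this θ' θ (by rwa [abs_sub_comm]) (le_of_not_ge hle)
  rw [abs_sub_comm, abs_of_nonneg (sub_nonneg.mpr hle)] at huv ⊢
  have hratio : exp (-v) / exp (-u) = exp (-(v - u)) := by rw [← exp_sub]; ring_nf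
  have hsmall : 2 * exp (-(v - u)) ≤ 1 := by
    have := exp_le_exp.mpr (neg_le_neg huv)
    linarith [exp_neg_one_lt_half]
  rw [Hker, max_eq_left (exp_le_exp.mpr (neg_le_neg hle)), ← hratio]
  rw [← norm_cexp_neg_add_mul_I u θ, ← norm_cexp_neg_add_mul_I v θ']
  refine abs_log_norm_div_norm_sub_le (norm_pos_iff.mpr (Complex.exp_ne_zero _)) ?_
  rwa [norm_cexp_neg_add_mul_I, norm_cexp_neg_add_mul_I, ← div_le_one (exp_pos _), mul_div_assoc,
    hratio]

/-- for `t ≥ 1`, `n ≠ 0` and `|s| + |s'| ≤ t`,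
`|H(s, θ, s' + 2nt, θ')| ≤ 2 e^{|s| + |s'| - 2|n|t}`. -/
theorem abs_Hker_translate_le (t : ℝ) (ht : 1 ≤ t) (n : ℤ) (hn : n ≠ 0)
    (s s' θ θ' : ℝ) (h : |s| + |s'| ≤ t) :
    |Hker s θ (s' + 2 * (n : ℝ) * t) θ'| ≤ 2 * Real.exp (|s| + |s'| - 2 * |(n : ℝ)| * t) := by
  have hn1 : (1 : ℝ) ≤ |(n : ℝ)| := by exact_mod_cast Int.one_le_abs hn
  have hgap : 2 * |(n : ℝ)| * t - (|s| + |s'|) ≤ |s - (s' + 2 * n * t)| := by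
    have h2nt : |2 * (n : ℝ) * t| = 2 * |(n : ℝ)| * t := by
      rw [abs_mul, abs_mul, abs_two, abs_of_nonneg (by linarith : (0 : ℝ) ≤ t)]
    have hrev := abs_sub_abs_le_abs_sub (2 * (n : ℝ) * t) (s - s')
    rw [h2nt] at hrev
    rw [abs_sub_comm s, show s' + 2 * (n : ℝ) * t - s = 2 * n * t - (s - s') by ring]
    linarith [abs_sub s s']
  calc |Hker s θ (s' + 2 * n * t) θ'| ≤ 2 * exp (-|s - (s' + 2 * n * t)|) :=
        abs_Hker_le_two_mul_exp_neg_abs_sub θ θ' (by nlinarith)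
    _ ≤ 2 * exp (|s| + |s'| - 2 * |(n : ℝ)| * t) := by gcongr; linarith
end

section
/- Let t ≥ 1 and fix (s, θ) ∈ ℝ² with |s| < t. Then the function u(s', θ') = ∑_{n∈ℤ, n≠0} H(s, θ, s' + 2nt, θ'), defined on the strip {(s', θ') ∈ ℝ² : |s'| < t}, is twice continuously differentiable there and harmonic: ∂²u/∂s'² + ∂²u/∂θ'² = 0 on the strip. -/
open MeasureTheory Filter Real

noncomputable section HarmAux

/-- the factor `c_n(z)` -/
def ccf (t s θ : ℝ) (n : ℤ) (z : ℂ) : ℂ :=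
  Complex.exp (((-(2 * (|n| : ℝ) * t) : ℝ) : ℂ) +
    (if 0 < n then (1 : ℂ) else -1) * ((s : ℂ) + (θ : ℂ) * Complex.I - z))

def Fn (t s θ : ℝ) (n : ℤ) (z : ℂ) : ℂ := -Complex.log (1 - ccf t s θ n z)

def Fn' (t s θ : ℝ) (n : ℤ) (z : ℂ) : ℂ :=
  -((if 0 < n then (1 : ℂ) else -1) * ccf t s θ n z * (1 - ccf t s θ n z)⁻¹)

def GG (t s θ : ℝ) (z : ℂ) : ℂ := ∑' n : {n : ℤ // n ≠ 0}, Fn t s θ n z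

def bnd (t b : ℝ) (n : ℤ) : ℝ := Real.exp (t + b) * Real.exp (-(2 * t)) ^ n.natAbs

lemma abs_ccf (t s θ : ℝ) (n : ℤ) (z : ℂ) :
    ‖ccf t s θ n z‖ =
      Real.exp (-(2 * (|n| : ℝ) * t) + (if 0 < n then (1:ℝ) else -1) * (s - z.re)) := by
  rw [ccf, Complex.norm_exp]
  congr 1
  rcases lt_or_ge 0 n with h | h <;>
    simp [h, not_lt.2, Complex.add_re, Complex.sub_re] <;> ring_nf

lemma abs_ccf_le_bnd {t s b : ℝ} (θ : ℝ) (hs : |s| ≤ t) {n : ℤ} {z : ℂ}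
    (hz : |z.re| ≤ b) : ‖ccf t s θ n z‖ ≤ bnd t b n := by
  rw [abs_ccf, bnd, ← Real.exp_nat_mul, ← Real.exp_add]
  apply Real.exp_le_exp.2
  have h1 : (|n| : ℝ) = (n.natAbs : ℝ) := by
    rw [Nat.cast_natAbs]; exact Int.cast_abs.symm
  have h2 : (if 0 < n then (1:ℝ) else -1) * (s - z.re) ≤ |s| + |z.re| := by
    have ha := neg_abs_le s; have hb := le_abs_self s
    have hc := neg_abs_le z.re; have hd := le_abs_self z.re
    split_ifs <;> nlinarith
  rw [h1]
  have := abs_le.1 hz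
  nlinarith [abs_nonneg s, abs_nonneg z.re]

lemma abs_ccf_lt {t s b : ℝ} (θ : ℝ) (hs : |s| ≤ t) (ht : 0 < t) {n : ℤ} (hn : n ≠ 0) {z : ℂ}
    (hz : |z.re| ≤ b) : ‖ccf t s θ n z‖ ≤ Real.exp (b - t) := by
  rw [abs_ccf]
  apply Real.exp_le_exp.2
  have h1 : (1 : ℝ) ≤ (|n| : ℝ) := by
    have := Int.one_le_abs hn
    exact_mod_cast this
  have h2 : (if 0 < n then (1:ℝ) else -1) * (s - z.re) ≤ |s| + |z.re| := by
    have ha := neg_abs_le s; have hb := le_abs_self s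
    have hc := neg_abs_le z.re; have hd := le_abs_self z.re
    split_ifs <;> nlinarith
  have := abs_le.1 hz
  nlinarith

lemma summable_bnd {t : ℝ} (ht : 0 < t) (b : ℝ) :
    Summable (fun n : {n : ℤ // n ≠ 0} => bnd t b n) := by
  have hZ : Summable (fun n : ℤ => bnd t b n) := by
    have hr : Real.exp (-(2 * t)) < 1 := Real.exp_lt_one_iff.2 (by linarith)
    have hr0 : 0 ≤ Real.exp (-(2 * t)) := Real.exp_nonneg _
    have hnat : Summable (fun k : ℕ => Real.exp (t + b) * Real.exp (-(2 * t)) ^ k) :=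
      (summable_geometric_of_lt_one hr0 hr).mul_left _
    apply Summable.of_nat_of_neg
    · simpa [bnd] using hnat
    · simpa [bnd] using hnat
  exact hZ.subtype _

lemma one_sub_pos_aux {c : ℂ} (hc : ‖c‖ < 1) : 1 - ‖c‖ ≤ ‖1 - c‖ := by
  have := norm_sub_norm_le (1 : ℂ) c
  simpa using this

lemma one_sub_ne_zero_aux {c : ℂ} (hc : ‖c‖ < 1) : (1 : ℂ) - c ≠ 0 := by
  intro h
  have := one_sub_pos_aux hc
  rw [h] at this
  simp at this
  linarith

lemma re_one_sub_pos {c : ℂ} (hc : ‖c‖ < 1) : 0 < (1 - c).re := by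
  have h := Complex.re_le_norm c
  simp only [Complex.sub_re, Complex.one_re]
  linarith

lemma norm_Fn_le (t s θ : ℝ) {ρ : ℝ} (hρ : ρ < 1) {n : ℤ} {z : ℂ}
    (hc : ‖ccf t s θ n z‖ ≤ ρ) :
    ‖Fn t s θ n z‖ ≤ ‖ccf t s θ n z‖ * ((1 - ρ)⁻¹ + 1) := by
  set c := ccf t s θ n z with hcdef
  have h0 : 0 ≤ ‖c‖ := norm_nonneg _
  have hc1 : ‖c‖ < 1 := lt_of_le_of_lt hc hρ
  have hlog : ‖Complex.log (1 + -c)‖ ≤ ‖-c‖ ^ 2 * (1 - ‖-c‖)⁻¹ / 2 + ‖-c‖ :=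
    Complex.norm_log_one_add_le (by simpa using hc1)
  rw [Fn, norm_neg]
  have : (1 : ℂ) - c = 1 + -c := by ring
  rw [this]
  refine le_trans hlog ?_
  simp only [norm_neg]
  have hpos : (0:ℝ) < (1 - ρ)⁻¹ := inv_pos.2 (by linarith)
  have h1 : (0:ℝ) < (1 - ‖c‖)⁻¹ := inv_pos.2 (by linarith)
  have hinv : (1 - ‖c‖)⁻¹ ≤ (1 - ρ)⁻¹ := by
    apply inv_anti₀ <;> linarith
  have h2 : ‖c‖ ^ 2 ≤ ‖c‖ := by nlinarith
  have key : ‖c‖ ^ 2 * (1 - ‖c‖)⁻¹ / 2 ≤ ‖c‖ * (1 - ρ)⁻¹ := by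
    calc ‖c‖ ^ 2 * (1 - ‖c‖)⁻¹ / 2
        ≤ ‖c‖ * (1 - ‖c‖)⁻¹ := by nlinarith
      _ ≤ ‖c‖ * (1 - ρ)⁻¹ := mul_le_mul_of_nonneg_left hinv h0
  linarith

lemma norm_Fn'_le (t s θ : ℝ) {ρ : ℝ} (hρ : ρ < 1) {n : ℤ} {z : ℂ}
    (hc : ‖ccf t s θ n z‖ ≤ ρ) :
    ‖Fn' t s θ n z‖ ≤ ‖ccf t s θ n z‖ * (1 - ρ)⁻¹ := by
  set c := ccf t s θ n z with hcdef
  have h0 : 0 ≤ ‖c‖ := norm_nonneg _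
  have hc1 : ‖c‖ < 1 := lt_of_le_of_lt hc hρ
  have habs : ‖(if 0 < n then (1:ℂ) else -1)‖ = 1 := by
    split_ifs <;> simp
  rw [Fn', norm_neg, norm_mul, norm_mul, habs, one_mul, norm_inv]
  have hge : 1 - ρ ≤ ‖1 - c‖ := le_trans (by linarith) (one_sub_pos_aux hc1)
  rcases le_or_gt (1 - ρ) 0 with h | h
  · have : ρ = 1 := le_antisymm (le_of_lt hρ) (by linarith)
    linarith
  gcongr

lemma hasDerivAt_exp_affine (C B σ : ℂ) (z : ℂ) :
    HasDerivAt (fun w => Complex.exp (C + σ * (B - w)))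
      (-σ * Complex.exp (C + σ * (B - z))) z := by
  have h1 : HasDerivAt (fun w : ℂ => B - w) (-1) z := by
    simpa using (hasDerivAt_id z).const_sub B
  have h2 := ((h1.const_mul σ).const_add C).cexp
  exact h2.congr_deriv (by ring)

lemma hasDerivAt_Fn (t s θ : ℝ) {n : ℤ} {z : ℂ} (hc : ‖ccf t s θ n z‖ < 1) :
    HasDerivAt (Fn t s θ n) (Fn' t s θ n z) z := by
  have hcder : HasDerivAt (ccf t s θ n)
      (-(if 0 < n then (1:ℂ) else -1) * ccf t s θ n z) z :=
    hasDerivAt_exp_affine ((-(2 * (|n| : ℝ) * t) : ℝ) : ℂ) ((s : ℂ) + (θ : ℂ) * Complex.I)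
      (if 0 < n then (1:ℂ) else -1) z
  have h1c : HasDerivAt (fun w => (1 : ℂ) - ccf t s θ n w)
      ((if 0 < n then (1:ℂ) else -1) * ccf t s θ n z) z := by
    have := hcder.const_sub 1
    exact this.congr_deriv (by ring)
  have hlog : HasDerivAt Complex.log (1 - ccf t s θ n z)⁻¹ (1 - ccf t s θ n z) :=
    Complex.hasDerivAt_log (Or.inl (re_one_sub_pos hc))
  have hcomp := (hlog.comp z h1c).neg
  have heq : Fn t s θ n = fun w => -((Complex.log ∘ fun w => 1 - ccf t s θ n w) w) := by
    funext w; simp [Fn, Function.comp]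
  rw [heq, Fn']
  exact hcomp.congr_deriv (by ring)

lemma isOpen_strip (b : ℝ) : IsOpen {z : ℂ | |z.re| < b} :=
  isOpen_Iio.preimage (_root_.continuous_abs.comp Complex.continuous_re)

lemma convex_strip (b : ℝ) : Convex ℝ {z : ℂ | |z.re| < b} := by
  have h : {z : ℂ | |z.re| < b} = Complex.reLm ⁻¹' (Set.Ioo (-b) b) := by
    ext z; simp [abs_lt, Complex.reLm]
  rw [h]
  exact (convex_Ioo _ _).linear_preimage Complex.reLm

lemma summable_Fn (t s θ : ℝ) (ht : 1 ≤ t) (hs : |s| < t) {b : ℝ} (hb : b < t) {z : ℂ}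
    (hz : |z.re| ≤ b) : Summable (fun n : {n : ℤ // n ≠ 0} => Fn t s θ n z) := by
  have ht0 : 0 < t := by linarith
  set ρ := Real.exp (b - t) with hρdef
  have hρ : ρ < 1 := Real.exp_lt_one_iff.2 (by linarith)
  have hρ0 : (0:ℝ) ≤ ρ := Real.exp_nonneg _
  apply Summable.of_norm_bounded (g := fun n : {n : ℤ // n ≠ 0} => bnd t b n * ((1 - ρ)⁻¹ + 1))
    ((summable_bnd ht0 b).mul_right _)
  intro n
  refine le_trans (norm_Fn_le t s θ hρ (abs_ccf_lt θ hs.le ht0 n.2 hz)) ?_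
  apply mul_le_mul_of_nonneg_right (abs_ccf_le_bnd θ hs.le hz)
  have : (0:ℝ) < (1 - ρ)⁻¹ := inv_pos.2 (by linarith)
  linarith

lemma GG_hasDerivAt (t s θ : ℝ) (ht : 1 ≤ t) (hs : |s| < t) {z₀ : ℂ} (hz₀ : |z₀.re| < t) :
    HasDerivAt (GG t s θ) (∑' n : {n : ℤ // n ≠ 0}, Fn' t s θ n z₀) z₀ := by
  have ht0 : 0 < t := by linarith
  set b := (|z₀.re| + t) / 2 with hbdef
  have habs := abs_nonneg z₀.re
  have hb1 : |z₀.re| < b := by rw [hbdef]; linarith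
  have hb2 : b < t := by rw [hbdef]; linarith
  have hb0 : 0 < b := by rw [hbdef]; linarith
  set ρ := Real.exp (b - t) with hρdef
  have hρ : ρ < 1 := Real.exp_lt_one_iff.2 (by linarith)
  have hρ0 : (0:ℝ) ≤ ρ := Real.exp_nonneg _
  have hinvpos : (0:ℝ) ≤ (1 - ρ)⁻¹ := (inv_pos.2 (by linarith)).le
  exact hasDerivAt_tsum_of_isPreconnected
    (u := fun n : {n : ℤ // n ≠ 0} => bnd t b n * (1 - ρ)⁻¹) (y₀ := (0:ℂ))
    ((summable_bnd ht0 b).mul_right _)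
    (isOpen_strip b) ((convex_strip b).isPreconnected)
    (fun n y hy => hasDerivAt_Fn t s θ
      (lt_of_le_of_lt (abs_ccf_lt θ hs.le ht0 n.2 (le_of_lt hy)) hρ))
    (fun n y hy => le_trans (norm_Fn'_le t s θ hρ (abs_ccf_lt θ hs.le ht0 n.2 (le_of_lt hy)))
      (mul_le_mul_of_nonneg_right (abs_ccf_le_bnd θ hs.le (le_of_lt hy)) hinvpos))
    (by simp only [Set.mem_setOf_eq, Complex.zero_re, abs_zero]; exact hb0)
    (summable_Fn t s θ ht hs hb2 (by simp only [Complex.zero_re, abs_zero]; exact hb0.le))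
    hb1

lemma key_id (t s θ : ℝ) (ht : 1 ≤ t) (hs : |s| < t) {n : ℤ} (hn : n ≠ 0) (p : ℝ × ℝ)
    (hp : |p.1| < t) :
    Hker s θ (p.1 + 2 * ((n : ℤ) : ℝ) * t) p.2 =
      (Fn t s θ n ((p.1 : ℂ) + (p.2 : ℂ) * Complex.I)).re := by
  have ht0 : 0 < t := by linarith
  set z : ℂ := (p.1 : ℂ) + (p.2 : ℂ) * Complex.I with hzdef
  have hzre : z.re = p.1 := by simp [hzdef]
  have habsc : ‖ccf t s θ n z‖ < 1 := by
    refine lt_of_le_of_lt (abs_ccf_lt θ hs.le ht0 hn (le_of_eq (by rw [hzre]))) ?_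
    exact Real.exp_lt_one_iff.2 (by linarith)
  have hc0 : (1:ℂ) - ccf t s θ n z ≠ 0 := one_sub_ne_zero_aux habsc
  have hx : 0 < ‖1 - ccf t s θ n z‖ := norm_pos_iff.mpr hc0
  have hFnre : (Fn t s θ n z).re = -Real.log (‖1 - ccf t s θ n z‖) := by
    rw [Fn, Complex.neg_re, Complex.log_re]
  rw [hFnre, Hker]
  set s'' : ℝ := p.1 + 2 * ((n : ℤ) : ℝ) * t with hs''
  set A : ℂ := Complex.exp (-(s:ℂ) + (θ:ℂ) * Complex.I) with hA
  set W : ℂ := Complex.exp (-(s'':ℂ) + (p.2:ℂ) * Complex.I) with hW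
  have habsA : ‖A‖ = Real.exp (-s) := by rw [hA, Complex.norm_exp]; congr 1; simp
  have habsW : ‖W‖ = Real.exp (-s'') := by rw [hW, Complex.norm_exp]; congr 1; simp
  have hps := abs_lt.1 hp
  have hss := abs_lt.1 hs
  rcases hn.lt_or_gt with hn' | hn'
  · -- n < 0
    have hn1 : (n:ℝ) ≤ -1 := by exact_mod_cast Int.cast_le.2 (by omega : n ≤ -1)
    have hlt : s'' < s := by rw [hs'']; nlinarith
    have hmax : max (Real.exp (-s)) (Real.exp (-s'')) = Real.exp (-s'') :=
      max_eq_right (Real.exp_le_exp.2 (by linarith))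
    have hccf : ccf t s θ n z = (starRingEnd ℂ) (A / W) := by
      rw [hA, hW, ← Complex.exp_sub, ← Complex.exp_conj, ccf, if_neg (not_lt.2 hn'.le)]
      congr 1
      have habsn : ((|n| : ℤ) : ℝ) = -(n:ℝ) := by
        rw [abs_of_neg hn']; push_cast; ring
      have habsn' : |(n:ℝ)| = -(n:ℝ) := abs_of_neg (by exact_mod_cast hn')
      apply Complex.ext
      · simp [hzdef, habsn, habsn', hs'']; ring
      · simp [hzdef]; ring
    have habsfrac : ‖1 - A / W‖ = ‖1 - ccf t s θ n z‖ := by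
      rw [hccf, show (1 : ℂ) - (starRingEnd ℂ) (A / W) = (starRingEnd ℂ) (1 - A / W) by
        rw [map_sub, map_one]]
      exact (Complex.norm_conj _).symm
    have hW0 : W ≠ 0 := by rw [hW]; exact Complex.exp_ne_zero _
    have hAW : A - W = W * (A / W - 1) := by
      have h := div_mul_cancel₀ A hW0
      calc A - W = A / W * W - W := by rw [h]
        _ = W * (A / W - 1) := by ring
    have habsAW : ‖A - W‖ = Real.exp (-s'') * ‖1 - A / W‖ := by
      rw [hAW, norm_mul, habsW, norm_sub_rev]
    rw [hmax, habsAW, habsfrac]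
    have h5 : Real.exp (-s'') / (Real.exp (-s'') * ‖1 - ccf t s θ n z‖) =
        (‖1 - ccf t s θ n z‖)⁻¹ := by
      rw [div_mul_eq_div_div, div_self (Real.exp_ne_zero _), one_div]
    rw [h5, Real.log_inv]
  · -- 0 < n
    have hn1 : (1:ℝ) ≤ (n:ℝ) := by exact_mod_cast Int.cast_le.2 (by omega : 1 ≤ n)
    have hlt : s < s'' := by rw [hs'']; nlinarith
    have hmax : max (Real.exp (-s)) (Real.exp (-s'')) = Real.exp (-s) :=
      max_eq_left (Real.exp_le_exp.2 (by linarith))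
    have hccf : ccf t s θ n z = (starRingEnd ℂ) (W / A) := by
      rw [hA, hW, ← Complex.exp_sub, ← Complex.exp_conj, ccf, if_pos hn']
      congr 1
      have habsn : ((|n| : ℤ) : ℝ) = (n:ℝ) := by
        rw [abs_of_pos hn']
      have habsn' : |(n:ℝ)| = (n:ℝ) := abs_of_pos (by exact_mod_cast hn')
      apply Complex.ext
      · simp [hzdef, habsn, habsn', hs'']; ring
      · simp [hzdef]; ring
    have habsfrac : ‖1 - W / A‖ = ‖1 - ccf t s θ n z‖ := by
      rw [hccf, show (1 : ℂ) - (starRingEnd ℂ) (W / A) = (starRingEnd ℂ) (1 - W / A) by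
        rw [map_sub, map_one]]
      exact (Complex.norm_conj _).symm
    have hA0 : A ≠ 0 := by rw [hA]; exact Complex.exp_ne_zero _
    have hAW : A - W = A * (1 - W / A) := by
      have h := div_mul_cancel₀ W hA0
      calc A - W = A - W / A * A := by rw [h]
        _ = A * (1 - W / A) := by ring
    have habsAW : ‖A - W‖ = Real.exp (-s) * ‖1 - W / A‖ := by
      rw [hAW, norm_mul, habsA]
    rw [hmax, habsAW, habsfrac]
    have h5 : Real.exp (-s) / (Real.exp (-s) * ‖1 - ccf t s θ n z‖) =
        (‖1 - ccf t s θ n z‖)⁻¹ := by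
      rw [div_mul_eq_div_div, div_self (Real.exp_ne_zero _), one_div]
    rw [h5, Real.log_inv]

lemma sum_id (t s θ : ℝ) (ht : 1 ≤ t) (hs : |s| < t) (p : ℝ × ℝ) (hp : |p.1| < t) :
    ∑' n : {n : ℤ // n ≠ 0}, Hker s θ (p.1 + 2 * ((n : ℤ) : ℝ) * t) p.2
      = (GG t s θ ((p.1 : ℂ) + (p.2 : ℂ) * Complex.I)).re := by
  set z : ℂ := (p.1 : ℂ) + (p.2 : ℂ) * Complex.I with hzdef
  have hzre : |z.re| ≤ |p.1| := le_of_eq (by simp [hzdef])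
  have hsum : Summable (fun n : {n : ℤ // n ≠ 0} => Fn t s θ n z) :=
    summable_Fn t s θ ht hs hp hzre
  calc ∑' n : {n : ℤ // n ≠ 0}, Hker s θ (p.1 + 2 * ((n : ℤ) : ℝ) * t) p.2
      = ∑' n : {n : ℤ // n ≠ 0}, (Fn t s θ n z).re :=
        tsum_congr (fun n => key_id t s θ ht hs n.2 p hp)
    _ = (GG t s θ z).re := by
        have := Complex.reCLM.map_tsum hsum
        simpa [GG] using this.symm

lemma hasDerivAt_re_comp_horiz (f : ℂ → ℂ) {f' : ℂ} {a c : ℝ}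
    (hf : HasDerivAt f f' ((a : ℂ) + (c : ℂ) * Complex.I)) :
    HasDerivAt (fun x : ℝ => (f ((x : ℂ) + (c : ℂ) * Complex.I)).re) f'.re a := by
  have hi : HasDerivAt (fun w : ℂ => w + (c : ℂ) * Complex.I) 1 ((a : ℂ)) :=
    (hasDerivAt_id _).add_const _
  have h1 : HasDerivAt (fun w : ℂ => f (w + (c : ℂ) * Complex.I)) f' (a : ℂ) := by
    simpa [Function.comp_def] using hf.comp (a : ℂ) hi
  have h2 := h1.comp_ofReal
  have h3 := (Complex.reCLM.hasFDerivAt.comp a h2.hasFDerivAt).hasDerivAt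
  simpa [Function.comp_def] using h3

lemma hasDerivAt_re_comp_vert (f : ℂ → ℂ) {f' : ℂ} {c b : ℝ}
    (hf : HasDerivAt f f' ((c : ℂ) + (b : ℂ) * Complex.I)) :
    HasDerivAt (fun y : ℝ => (f ((c : ℂ) + (y : ℂ) * Complex.I)).re) (-f'.im) b := by
  have hre : HasDerivAt (fun y : ℝ => ((y : ℂ))) 1 b := by
    exact Complex.ofRealCLM.hasDerivAt
  have hi : HasDerivAt (fun y : ℝ => (c : ℂ) + (y : ℂ) * Complex.I) Complex.I b := by
    simpa using (hre.mul_const Complex.I).const_add (c : ℂ)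
  have h2 : HasDerivAt (fun y : ℝ => f ((c : ℂ) + (y : ℂ) * Complex.I)) (Complex.I • f') b :=
    HasDerivAt.scomp b hf hi
  have h3 := (Complex.reCLM.hasFDerivAt.comp b h2.hasFDerivAt).hasDerivAt
  simpa [Complex.mul_re, Function.comp_def] using h3

end HarmAux

/-- for `t ≥ 1` and fixed `(s, θ)` with `|s| < t`, the function
`u(s', θ') = ∑_{n≠0} H(s, θ, s' + 2nt, θ')` is C² on the strip `{|s'| < t}` and harmonic
there: `∂²u/∂s'² + ∂²u/∂θ'² = 0`. -/
theorem harmonic_sum_Hker_translates (t : ℝ) (ht : 1 ≤ t) (s θ : ℝ) (hs : |s| < t) :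
    ContDiffOn ℝ 2
      (fun p : ℝ × ℝ => ∑' n : {n : ℤ // n ≠ 0}, Hker s θ (p.1 + 2 * ((n : ℤ) : ℝ) * t) p.2)
      {p : ℝ × ℝ | |p.1| < t} ∧
    ∀ s' θ' : ℝ, |s'| < t →
      deriv (deriv (fun a : ℝ =>
          ∑' n : {n : ℤ // n ≠ 0}, Hker s θ (a + 2 * ((n : ℤ) : ℝ) * t) θ')) s'
        + deriv (deriv (fun b : ℝ =>
          ∑' n : {n : ℤ // n ≠ 0}, Hker s θ (s' + 2 * ((n : ℤ) : ℝ) * t) b)) θ' = 0 := by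
  have ht0 : 0 < t := by linarith
  have hSopen : IsOpen {z : ℂ | |z.re| < t} := isOpen_strip t
  have hGGdiff : DifferentiableOn ℂ (GG t s θ) {z : ℂ | |z.re| < t} := fun z hz =>
    ((GG_hasDerivAt t s θ ht hs hz).differentiableAt).differentiableWithinAt
  have hGGan : AnalyticOnNhd ℂ (GG t s θ) {z : ℂ | |z.re| < t} := hGGdiff.analyticOnNhd hSopen
  have hG'an : AnalyticOnNhd ℂ (deriv (GG t s θ)) {z : ℂ | |z.re| < t} := hGGan.deriv
  constructor
  · -- C² part
    have hL : ContDiff ℝ 2 (fun p : ℝ × ℝ => (p.1 : ℂ) + (p.2 : ℂ) * Complex.I) :=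
      (Complex.ofRealCLM.contDiff.comp contDiff_fst).add
        ((Complex.ofRealCLM.contDiff.comp contDiff_snd).mul contDiff_const)
    have hGGC : ContDiffOn ℂ 2 (GG t s θ) {z : ℂ | |z.re| < t} :=
      hGGan.contDiffOn hSopen.uniqueDiffOn
    have hmaps : ∀ p : ℝ × ℝ, p ∈ {p : ℝ × ℝ | |p.1| < t} →
        ((p.1 : ℂ) + (p.2 : ℂ) * Complex.I) ∈ {z : ℂ | |z.re| < t} := by
      intro p hp; simpa using hp
    have hcomp : ContDiffOn ℝ 2
        ((GG t s θ) ∘ (fun p : ℝ × ℝ => (p.1 : ℂ) + (p.2 : ℂ) * Complex.I))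
        {p : ℝ × ℝ | |p.1| < t} :=
      (hGGC.restrict_scalars ℝ).comp hL.contDiffOn hmaps
    have hre : ContDiffOn ℝ 2
        (fun p : ℝ × ℝ => (GG t s θ ((p.1 : ℂ) + (p.2 : ℂ) * Complex.I)).re)
        {p : ℝ × ℝ | |p.1| < t} := Complex.reCLM.contDiff.comp_contDiffOn hcomp
    exact hre.congr (fun p hp => sum_id t s θ ht hs p hp)
  · intro s' θ' hs'
    have hz₀mem : ((s' : ℂ) + (θ' : ℂ) * Complex.I) ∈ {z : ℂ | |z.re| < t} := by simpa using hs'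
    have hGd : ∀ z ∈ {z : ℂ | |z.re| < t}, HasDerivAt (GG t s θ) (deriv (GG t s θ) z) z :=
      fun z hz => ((hGGan z hz).differentiableAt).hasDerivAt
    have hG'd : ∀ z ∈ {z : ℂ | |z.re| < t},
        HasDerivAt (deriv (GG t s θ)) (deriv (deriv (GG t s θ)) z) z :=
      fun z hz => ((hG'an z hz).differentiableAt).hasDerivAt
    have hO : IsOpen {a : ℝ | |a| < t} := isOpen_Iio.preimage continuous_abs
    -- horizontal direction
    have hfg : Set.EqOn
        (fun a : ℝ => ∑' n : {n : ℤ // n ≠ 0}, Hker s θ (a + 2 * ((n : ℤ) : ℝ) * t) θ')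
        (fun a : ℝ => (GG t s θ ((a : ℂ) + (θ' : ℂ) * Complex.I)).re) {a : ℝ | |a| < t} :=
      fun a ha => sum_id t s θ ht hs (a, θ') ha
    have hg1d : Set.EqOn
        (deriv (fun a : ℝ => (GG t s θ ((a : ℂ) + (θ' : ℂ) * Complex.I)).re))
        (fun a : ℝ => ((deriv (GG t s θ)) ((a : ℂ) + (θ' : ℂ) * Complex.I)).re)
        {a : ℝ | |a| < t} :=
      fun a ha => (hasDerivAt_re_comp_horiz (GG t s θ) (hGd _ (by simpa using ha))).deriv
    have e1 : deriv (deriv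
        (fun a : ℝ => ∑' n : {n : ℤ // n ≠ 0}, Hker s θ (a + 2 * ((n : ℤ) : ℝ) * t) θ')) s'
        = deriv (deriv (fun a : ℝ => (GG t s θ ((a : ℂ) + (θ' : ℂ) * Complex.I)).re)) s' := by
      apply Filter.EventuallyEq.deriv_eq
      apply Filter.eventuallyEq_of_mem (hO.mem_nhds hs')
      intro a ha
      exact Filter.EventuallyEq.deriv_eq (Filter.eventuallyEq_of_mem (hO.mem_nhds ha) hfg)
    have e2 : deriv (deriv (fun a : ℝ => (GG t s θ ((a : ℂ) + (θ' : ℂ) * Complex.I)).re)) s'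
        = deriv (fun a : ℝ => ((deriv (GG t s θ)) ((a : ℂ) + (θ' : ℂ) * Complex.I)).re) s' :=
      Filter.EventuallyEq.deriv_eq (Filter.eventuallyEq_of_mem (hO.mem_nhds hs') hg1d)
    have e3 : deriv (fun a : ℝ => ((deriv (GG t s θ)) ((a : ℂ) + (θ' : ℂ) * Complex.I)).re) s'
        = (deriv (deriv (GG t s θ)) ((s' : ℂ) + (θ' : ℂ) * Complex.I)).re :=
      (hasDerivAt_re_comp_horiz (deriv (GG t s θ)) (hG'd _ hz₀mem)).deriv
    -- vertical direction
    have hfg2 : (fun b : ℝ => ∑' n : {n : ℤ // n ≠ 0}, Hker s θ (s' + 2 * ((n : ℤ) : ℝ) * t) b)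
        = fun b : ℝ => (GG t s θ ((s' : ℂ) + (b : ℂ) * Complex.I)).re :=
      funext fun b => sum_id t s θ ht hs (s', b) hs'
    have hg2d : deriv (fun b : ℝ => (GG t s θ ((s' : ℂ) + (b : ℂ) * Complex.I)).re)
        = fun b : ℝ => -(((deriv (GG t s θ)) ((s' : ℂ) + (b : ℂ) * Complex.I)).im) :=
      funext fun b =>
        (hasDerivAt_re_comp_vert (GG t s θ) (hGd _ (by simpa using hs'))).deriv
    have hneg : (fun b : ℝ => -(((deriv (GG t s θ)) ((s' : ℂ) + (b : ℂ) * Complex.I)).im))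
        = fun b : ℝ => ((Complex.I * (deriv (GG t s θ)) ((s' : ℂ) + (b : ℂ) * Complex.I)).re) :=
      funext fun b => by simp [Complex.mul_re]
    have e4 : deriv
        (fun b : ℝ => ((Complex.I * (deriv (GG t s θ)) ((s' : ℂ) + (b : ℂ) * Complex.I)).re)) θ'
        = -((Complex.I * deriv (deriv (GG t s θ)) ((s' : ℂ) + (θ' : ℂ) * Complex.I)).im) := by
      have h := (hG'd _ hz₀mem).const_mul Complex.I
      exact (hasDerivAt_re_comp_vert (fun w => Complex.I * (deriv (GG t s θ)) w) h).deriv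
    rw [e1, e2, e3, hfg2, hg2d, hneg, e4]
    simp [Complex.mul_im]
end

section
/- Fix δ ∈ (0,1) and let N be a standard normal random variable. Then E[ | (1 − t^{−δ})^{−1/2} · exp( − N² t^{1−δ} / (2 (t − t^{1−δ})) ) − 1 | ] → 0 as t → ∞. (Equivalently: the Radon–Nikodym density (1 − t^{−δ})^{−1/2} e^{−W_{t^{1−δ}}²/(2(t − t^{1−δ}))} of the law of a Brownian bridge on [0,t] restricted to [0, t^{1−δ}] with respect to that of a Brownian motion on [0, t^{1−δ}] converges to 1 in L¹ as t → ∞, where W is a standard Brownian motion.) -/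
/-!
Dominated convergence. Once `t ^ δ ≥ 2` the prefactor `(1 - t^{-δ})^{-1/2}` is at most `2` and the
exponential is at most `1`, so the density lies in `[0, 2]` and `|density - 1| ≤ 1`. Pointwise,
the prefactor tends to `1` and, since `t - t^{1-δ} = t^{1-δ} (t^δ - 1)`, the exponent equals
`-x² / (2 (t^δ - 1)) → 0`.
-/

open MeasureTheory ProbabilityTheory Filter Real Topology

noncomputable def bridgeDensity (δ t x : ℝ) : ℝ :=
  (1 - t ^ (-δ)) ^ (-(1:ℝ) / 2) * exp (-x ^ 2 * t ^ (1 - δ) / (2 * (t - t ^ (1 - δ))))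

lemma self_sub_rpow_one_sub {t : ℝ} (ht : 0 < t) (δ : ℝ) :
    t - t ^ (1 - δ) = t ^ (1 - δ) * (t ^ δ - 1) := by
  rw [mul_sub, ← rpow_add ht, sub_add_cancel, rpow_one, mul_one]

lemma measurable_bridgeDensity (δ t : ℝ) : Measurable (bridgeDensity δ t) := by
  unfold bridgeDensity; fun_prop

lemma one_sub_rpow_neg_rpow_le_two {t δ : ℝ} (ht : 0 < t) (hδ : 2 ≤ t ^ δ) :
    (1 - t ^ (-δ)) ^ (-(1:ℝ) / 2) ≤ 2 := by
  have hs : t ^ (-δ) ≤ 1 / 2 := by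
    rw [rpow_neg ht.le, one_div]; exact inv_anti₀ two_pos hδ
  have hs0 : 0 < t ^ (-δ) := rpow_pos_of_pos ht _
  calc (1 - t ^ (-δ)) ^ (-(1:ℝ) / 2) ≤ (1 - t ^ (-δ)) ^ (-1 : ℝ) :=
        rpow_le_rpow_of_exponent_ge (by linarith) (by linarith) (by norm_num)
    _ = (1 - t ^ (-δ))⁻¹ := rpow_neg_one _
    _ ≤ (1 / 2)⁻¹ := inv_anti₀ (by norm_num) (by linarith)
    _ = 2 := by norm_num

lemma tendsto_bridgeDensity {δ : ℝ} (hδ : 0 < δ) (x : ℝ) :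
    Tendsto (fun t => bridgeDensity δ t x) atTop (𝓝 1) := by
  have hprefactor : Tendsto (fun t : ℝ => (1 - t ^ (-δ)) ^ (-(1:ℝ) / 2)) atTop (𝓝 1) := by
    simpa using ((tendsto_rpow_neg_atTop hδ).const_sub 1).rpow_const (p := -(1:ℝ) / 2)
      (Or.inl (by norm_num))
  have hexponent : Tendsto (fun t : ℝ => -x ^ 2 * t ^ (1 - δ) / (2 * (t - t ^ (1 - δ))))
      atTop (𝓝 0) := by
    have hden : Tendsto (fun t : ℝ => 2 * (t ^ δ - 1)) atTop atTop :=
      (tendsto_atTop_add_const_right _ (-1) (tendsto_rpow_atTop hδ)).const_mul_atTop two_pos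
    refine ((tendsto_const_nhds (x := -x ^ 2)).div_atTop hden).congr' ?_
    filter_upwards [eventually_gt_atTop 0] with t ht
    rw [self_sub_rpow_one_sub ht, mul_left_comm, mul_comm _ (t ^ (1 - δ)),
      mul_div_mul_left _ _ (rpow_pos_of_pos ht _).ne']
  simpa [bridgeDensity] using hprefactor.mul ((continuous_exp.tendsto 0).comp hexponent)

lemma abs_bridgeDensity_sub_one_le_one {δ t : ℝ} (hδ : 0 ≤ δ) (ht : 1 ≤ t) (htδ : 2 ≤ t ^ δ)
    (x : ℝ) : |bridgeDensity δ t x - 1| ≤ 1 := by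
  have hpow : t ^ (1 - δ) ≤ t := by
    simpa using rpow_le_rpow_of_exponent_le ht (by linarith : 1 - δ ≤ 1)
  have hexp : exp (-x ^ 2 * t ^ (1 - δ) / (2 * (t - t ^ (1 - δ)))) ≤ 1 :=
    exp_le_one_iff.2 <| div_nonpos_of_nonpos_of_nonneg
      (mul_nonpos_of_nonpos_of_nonneg (neg_nonpos.2 (sq_nonneg x)) (rpow_nonneg (by linarith) _))
      (by linarith)
  have hprefactor := one_sub_rpow_neg_rpow_le_two (by linarith) htδ
  have hbase : 0 ≤ 1 - t ^ (-δ) := by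
    have := rpow_le_one_of_one_le_of_nonpos ht (neg_nonpos.2 hδ); linarith
  have hnonneg : 0 ≤ bridgeDensity δ t x := mul_nonneg (rpow_nonneg hbase _) (exp_pos _).le
  have hle : bridgeDensity δ t x ≤ 2 := by
    unfold bridgeDensity
    nlinarith [rpow_nonneg hbase (-(1:ℝ) / 2),
      exp_pos (-x ^ 2 * t ^ (1 - δ) / (2 * (t - t ^ (1 - δ))))]
  rw [abs_le]; constructor <;> linarith

/-- for `δ ∈ (0,1)` and a standard normal `N`,
`E[ |(1 − t^{−δ})^{−1/2} exp(−N² t^{1−δ}/(2(t − t^{1−δ}))) − 1| ] → 0` as `t → ∞`;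
i.e. the Radon–Nikodym density of the Brownian bridge on `[0,t]` restricted to `[0,t^{1−δ}]`
with respect to Brownian motion converges to `1` in `L¹`. -/
theorem bridge_density_tendsto_one {Ω : Type*} [MeasurableSpace Ω]
    (P : Measure Ω) [IsProbabilityMeasure P]
    (δ : ℝ) (hδ : δ ∈ Set.Ioo (0:ℝ) 1)
    (N : Ω → ℝ) (hN : P.map N = gaussianReal 0 1) :
    Tendsto (fun t : ℝ => ∫ ω,
        |(1 - t ^ (-δ)) ^ (-(1:ℝ) / 2) *
            Real.exp (-(N ω) ^ 2 * t ^ (1 - δ) / (2 * (t - t ^ (1 - δ)))) - 1| ∂P)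
      atTop (nhds 0) := by
  have hNm : AEMeasurable N P := by
    by_contra h
    exact IsProbabilityMeasure.ne_zero (gaussianReal 0 1) (hN ▸ Measure.map_of_not_aemeasurable h)
  have hbounded : ∀ᶠ t in atTop, ∀ x, |bridgeDensity δ t x - 1| ≤ 1 := by
    filter_upwards [(tendsto_rpow_atTop hδ.1).eventually_ge_atTop 2, eventually_ge_atTop 1]
      with t htδ ht using abs_bridgeDensity_sub_one_le_one hδ.1.le ht htδ
  have hL1 := tendsto_integral_filter_of_dominated_convergence (fun _ => 1)
    (F := fun t ω => |bridgeDensity δ t (N ω) - 1|)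
    (Eventually.of_forall fun t =>
      (((measurable_bridgeDensity δ t).comp_aemeasurable hNm).sub_const 1).abs.aestronglyMeasurable)
    (hbounded.mono fun t ht => Eventually.of_forall fun ω => by simpa using ht (N ω))
    (integrable_const 1)
    (Eventually.of_forall fun ω => by
      simpa using ((tendsto_bridgeDensity hδ.1 (N ω)).sub_const 1).abs)
  rw [integral_zero] at hL1
  exact hL1
end
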